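/- arXiv:2310.18136 — 3 statements merged into one kernel-verified Lean document; each statement's English description precedes it below -/
import Mathlib

section
/- L^p-version of Fell's absorption principle: let G be a locally compact Hausdorff group with left Haar measure μ, let F be a complex Banach space, let 1 ≤ p < ∞, and let π be a homomorphism from G to the group of linear isometric bijections of F such that for every a.e. strongly measurable function η : G → F, the function t ↦ π(t)(η(t)) is again a.e. strongly measurable. Then there exists a surjective linear isometry V of the Bochner space L^p(G, μ; F) onto itself such that: (1) for every η ∈ L^p(G, μ; F), V(η) agrees μ-a.e. with the function t ↦ π(t)(η(t)); and (2) V intertwines λ_p ⊗ id with λ_p ⊗ π, i.e. for every s ∈ G and all η, η' ∈ L^p(G, μ; F) with η' equal μ-a.e. to t ↦ η(s⁻¹·t), the element V(η') is equal μ-a.e. to t ↦ π(s)((V η)(s⁻¹·t)). -/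
open MeasureTheory ENNReal Set Filter
open scoped NNReal Topology

/-- If `N` is a null set contained in a compact set, then `N⁻¹` is null,
for a regular Haar measure on a locally compact group. -/
lemma aux_inv_null {G : Type*} [Group G] [TopologicalSpace G] [IsTopologicalGroup G]
    [LocallyCompactSpace G] [T2Space G] [MeasurableSpace G] [BorelSpace G]
    (μ : Measure G) [μ.IsHaarMeasure] [μ.Regular]
    {C N : Set G} (hC : IsCompact C) (hNC : N ⊆ C) (hN : μ N = 0) : μ N⁻¹ = 0 := by
  obtain ⟨L, L_comp, hCL⟩ := exists_compact_superset hC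
  obtain ⟨g, g_comp, g_nonneg, g_one⟩ :
      ∃ g : C(G, ℝ), HasCompactSupport g ∧ 0 ≤ g ∧ g 1 ≠ 0 := exists_continuous_nonneg_pos 1
  set ν := μ.inv with hν
  have c_pos : 0 < ∫ x, g x ∂μ :=
    g.continuous.integral_pos_of_hasCompactSupport_nonneg_nonzero g_comp g_nonneg g_one
  set D : G → ℝ := fun x => ∫ y, g (y⁻¹ * x) ∂ν with hD
  have D_cont : Continuous D := continuous_integral_apply_inv_mul g.continuous g_comp
  have D_pos : ∀ x, 0 < D x := by
    intro x
    have Cc : Continuous fun y ↦ (g : G → ℝ) (y⁻¹ * x) :=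
      g.continuous.comp (continuous_inv.mul continuous_const)
    apply (integral_pos_iff_support_of_nonneg _ _).2
    · apply Cc.isOpen_support.measure_pos ν
      exact ⟨x * 1⁻¹, by simpa using g_one⟩
    · exact fun y ↦ g_nonneg (y⁻¹ * x)
    · apply Cc.integrable_of_hasCompactSupport
      exact g_comp.comp_homeomorph ((Homeomorph.inv G).trans (Homeomorph.mulRight x))
  obtain ⟨δ, δ_pos, hδ⟩ : ∃ δ : ℝ, 0 < δ ∧ ∀ y ∈ L⁻¹, δ ≤ D y := by
    rcases (L⁻¹ : Set G).eq_empty_or_nonempty with h | hne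
    · exact ⟨1, one_pos, by simp [h]⟩
    · obtain ⟨y₀, hy₀, hmin⟩ := L_comp.inv.exists_isMinOn hne D_cont.continuousOn
      exact ⟨D y₀, D_pos y₀, fun y hy => hmin hy⟩
  set Cst : ℝ≥0∞ := ENNReal.ofReal (δ⁻¹ * ∫ x, g x ∂μ) with hCst
  have key : ∀ U : Set G, IsOpen U → U ⊆ interior L → μ U⁻¹ ≤ Cst * μ U := by
    intro U U_open hUL
    have hμU_ne : μ U ≠ ∞ :=
      ((measure_mono (hUL.trans interior_subset)).trans_lt L_comp.measure_lt_top).ne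
    rw [U_open.inv.measure_eq_iSup_isCompact]
    refine iSup_le fun K => iSup_le fun hKU => iSup_le fun K_comp => ?_
    obtain ⟨f, fK, fU, f_comp, f_range⟩ :=
      exists_continuous_one_zero_of_isCompact K_comp U_open.inv.isClosed_compl
        (by rwa [Set.disjoint_compl_right_iff_subset])
    have f_int : Integrable (f : G → ℝ) μ :=
      f.continuous.integrable_of_hasCompactSupport f_comp
    have step1 : μ K ≤ ENNReal.ofReal (∫ x, f x ∂μ) :=
      f_int.measure_le_integral (Eventually.of_forall fun x => (f_range x).1)
        (fun x hx => (fK hx).ge)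
    have combo : ∫ x, f x ∂μ
        = (∫ y, f y * (∫ z, g (z⁻¹ * y) ∂ν)⁻¹ ∂ν) * ∫ x, g x ∂μ :=
      Measure.integral_isMulLeftInvariant_isMulRightInvariant_combo
        f.continuous f_comp g.continuous g_comp g_nonneg g_one
    have hUinv_meas : MeasurableSet (U⁻¹ : Set G) := U_open.inv.measurableSet
    have hνU : ν U⁻¹ = μ U := by
      rw [Measure.inv_apply, inv_inv]
    have hνU_ne : ν U⁻¹ ≠ ∞ := by rwa [hνU]
    have ind_int : Integrable ((U⁻¹ : Set G).indicator fun _ => δ⁻¹) ν := by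
      rw [integrable_indicator_iff hUinv_meas]
      exact integrableOn_const hνU_ne
    have f_int' : Integrable (fun y => f y * (D y)⁻¹) ν := by
      apply (f.continuous.mul (D_cont.inv₀ fun x => (D_pos x).ne')).integrable_of_hasCompactSupport
      exact f_comp.mul_right
    have ptwise : ∀ y, f y * (D y)⁻¹ ≤ (U⁻¹ : Set G).indicator (fun _ => δ⁻¹) y := by
      intro y
      by_cases hy : y ∈ (U⁻¹ : Set G)
      · rw [Set.indicator_of_mem hy]
        have hyL : y ∈ (L⁻¹ : Set G) := by
          have : y ∈ (interior L : Set G)⁻¹ := Set.inv_subset_inv.2 hUL hy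
          exact Set.inv_subset_inv.2 interior_subset this
        have h1 : (D y)⁻¹ ≤ δ⁻¹ := by
          exact inv_anti₀ δ_pos (hδ y hyL)
        calc f y * (D y)⁻¹ ≤ 1 * δ⁻¹ := by
              apply mul_le_mul (f_range y).2 h1 (inv_nonneg.2 (D_pos y).le) zero_le_one
          _ = δ⁻¹ := one_mul _
      · simp [Set.indicator_of_notMem hy, fU hy]
    have step2 : ∫ y, f y * (D y)⁻¹ ∂ν ≤ δ⁻¹ * (μ U).toReal := by
      calc ∫ y, f y * (D y)⁻¹ ∂ν ≤ ∫ y, (U⁻¹ : Set G).indicator (fun _ => δ⁻¹) y ∂ν :=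
            integral_mono f_int' ind_int ptwise
        _ = (ν U⁻¹).toReal • δ⁻¹ := integral_indicator_const _ hUinv_meas
        _ = δ⁻¹ * (μ U).toReal := by rw [hνU, smul_eq_mul, mul_comm]
    calc μ K ≤ ENNReal.ofReal (∫ x, f x ∂μ) := step1
      _ ≤ ENNReal.ofReal ((δ⁻¹ * (μ U).toReal) * ∫ x, g x ∂μ) := by
          rw [combo]
          exact ENNReal.ofReal_le_ofReal (mul_le_mul_of_nonneg_right step2 c_pos.le)
      _ = Cst * μ U := by
          have h1 : (0:ℝ) ≤ δ⁻¹ * ∫ x, g x ∂μ := by positivity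
          rw [show δ⁻¹ * (μ U).toReal * ∫ x, g x ∂μ
              = (δ⁻¹ * ∫ x, g x ∂μ) * (μ U).toReal by ring,
            ENNReal.ofReal_mul h1, ENNReal.ofReal_toReal hμU_ne, hCst]
  have bound : ∀ ε : ℝ≥0∞, 0 < ε → μ N⁻¹ ≤ Cst * ε := by
    intro ε hε
    obtain ⟨U, hNU, U_open, hUε⟩ := Set.exists_isOpen_lt_of_lt N ε (by rw [hN]; exact hε)
    set U' := U ∩ interior L with hU'
    have hNU' : N ⊆ U' := Set.subset_inter hNU (hNC.trans hCL)
    have : μ N⁻¹ ≤ μ U'⁻¹ := measure_mono (Set.inv_subset_inv.2 hNU')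
    refine this.trans ((key U' (U_open.inter isOpen_interior) Set.inter_subset_right).trans ?_)
    exact mul_le_mul_right ((measure_mono Set.inter_subset_left).trans hUε.le) _
  refine le_antisymm ?_ zero_le
  refine ENNReal.le_of_forall_pos_le_add fun ε hε _ => ?_
  rw [zero_add]
  rcases eq_or_ne Cst 0 with h0 | h0
  · have h := bound 1 one_pos
    rw [h0, zero_mul] at h
    exact h.trans zero_le
  · have hCst_ne : Cst ≠ ∞ := ENNReal.ofReal_ne_top
    have hdiv : (0 : ℝ≥0∞) < ε / Cst :=
      ENNReal.div_pos (by exact_mod_cast hε.ne') hCst_ne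
    exact (bound _ hdiv).trans (ENNReal.mul_div_le)

/-- Inverse measurability for compactly supported strongly measurable functions. -/
lemma aux_inv_aesm {G : Type*} [Group G] [TopologicalSpace G] [IsTopologicalGroup G]
    [LocallyCompactSpace G] [T2Space G] [MeasurableSpace G] [BorelSpace G]
    (μ : Measure G) [μ.IsHaarMeasure] [μ.Regular]
    {F : Type*} [NormedAddCommGroup F] [NormedSpace ℂ F]
    (π : G →* (F ≃ₗᵢ[ℂ] F))
    (hmeas : ∀ η : G → F, AEStronglyMeasurable η μ →
      AEStronglyMeasurable (fun t => π t (η t)) μ)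
    {ζ : G → F} (hζ : StronglyMeasurable ζ) {C : Set G} (hCcomp : IsCompact C)
    (hsupp : ∀ t ∉ C, ζ t = 0) :
    AEStronglyMeasurable (fun t => (π t).symm (ζ t)) μ := by
  set ρ : G → F := fun t => ζ t⁻¹ with hρ
  have hρ_sm : StronglyMeasurable ρ := hζ.comp_measurable measurable_inv
  set σ : G → F := fun t => π t (ρ t) with hσdef
  have hσ : AEStronglyMeasurable σ μ := hmeas ρ hρ_sm.aestronglyMeasurable
  set τ : G → F := hσ.mk σ with hτdef
  have hτ_sm : StronglyMeasurable τ := hσ.stronglyMeasurable_mk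
  have hστ : σ =ᵐ[μ] τ := hσ.ae_eq_mk
  obtain ⟨N, hsubN, hNmeas, hN0⟩ :=
    exists_measurable_superset_of_null (μ := μ) (s := {t | σ t ≠ τ t}) hστ
  set N₂ : Set G := N ∩ C⁻¹ with hN₂
  have hN₂0 : μ N₂ = 0 := measure_mono_null Set.inter_subset_left hN0
  have hinv0 : μ N₂⁻¹ = 0 :=
    aux_inv_null μ hCcomp.inv Set.inter_subset_right hN₂0
  set h : G → F := fun t => (C⁻¹ : Set G).indicator τ t⁻¹ with hh
  have h_sm : StronglyMeasurable h :=
    (hτ_sm.indicator hCcomp.inv.isClosed.measurableSet).comp_measurable measurable_inv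
  refine ⟨h, h_sm, ?_⟩
  have : ∀ t ∉ (N₂⁻¹ : Set G), (π t).symm (ζ t) = h t := by
    intro t ht
    by_cases htC : t ∈ C
    · have htC' : t⁻¹ ∈ (C⁻¹ : Set G) := Set.inv_mem_inv.2 htC
      have htN : t⁻¹ ∉ N := by
        intro hmem
        exact ht (Set.mem_inv.2 ⟨hmem, htC'⟩)
      have hστt : σ t⁻¹ = τ t⁻¹ := by
        by_contra hne
        exact htN (hsubN hne)
      have hht : h t = τ t⁻¹ := by
        simp only [hh]
        exact Set.indicator_of_mem htC' τ
      rw [hht, ← hστt]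
      simp only [hσdef, hρ, inv_inv, map_inv, LinearIsometryEquiv.coe_inv]
    · have hht : h t = 0 := by
        simp only [hh]
        apply Set.indicator_of_notMem
        intro hc
        exact htC (by simpa using hc)
      rw [hsupp t htC, map_zero, hht]
  have hnull : μ {t | ¬ (π t).symm (ζ t) = h t} = 0 := by
    apply measure_mono_null _ hinv0
    intro t ht
    by_contra htn
    exact ht (this t htn)
  exact hnull

/-- Inverse measurability for `MemLp` functions. -/
lemma aux_inv_aesm_Lp {G : Type*} [Group G] [TopologicalSpace G] [IsTopologicalGroup G]
    [LocallyCompactSpace G] [T2Space G] [MeasurableSpace G] [BorelSpace G]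
    (μ : Measure G) [μ.IsHaarMeasure] [μ.Regular]
    {F : Type*} [NormedAddCommGroup F] [NormedSpace ℂ F]
    {p : ℝ≥0∞} (hp0 : p ≠ 0) (hp : p ≠ ⊤)
    (π : G →* (F ≃ₗᵢ[ℂ] F))
    (hmeas : ∀ η : G → F, AEStronglyMeasurable η μ →
      AEStronglyMeasurable (fun t => π t (η t)) μ)
    {ζ : G → F} (hζ : MemLp ζ p μ) :
    AEStronglyMeasurable (fun t => (π t).symm (ζ t)) μ := by
  obtain ⟨ξ, hξ_sm, hζae⟩ := hζ.aestronglyMeasurable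
  have hξ : MemLp ξ p μ := hζ.ae_eq hζae
  -- superlevel sets have finite measure
  set s : ℕ → Set G := fun n => {t | ((n : ℝ≥0) + 1)⁻¹ ≤ ‖ξ t‖₊} with hs
  have s_meas : ∀ n, MeasurableSet (s n) := fun n =>
    measurableSet_le measurable_const hξ_sm.nnnorm.measurable
  have s_fin : ∀ n, μ (s n) ≠ ∞ := fun n =>
    (hξ.meas_ge_lt_top hp0 hp (by positivity)).ne
  have s_cover : ∀ t, ξ t ≠ 0 → ∃ n, t ∈ s n := by
    intro t ht
    have hpos : (0 : ℝ) < ‖ξ t‖ := norm_pos_iff.2 ht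
    obtain ⟨n, hn⟩ := exists_nat_one_div_lt hpos
    refine ⟨n, ?_⟩
    show ((n : ℝ≥0) + 1)⁻¹ ≤ ‖ξ t‖₊
    rw [← NNReal.coe_le_coe, coe_nnnorm]
    push_cast
    calc ((n : ℝ) + 1)⁻¹ = 1 / ((n : ℝ) + 1) := (one_div _).symm
      _ ≤ ‖ξ t‖ := hn.le
  -- compact approximations from inside
  have approx : ∀ n m : ℕ, ∃ K, K ⊆ s n ∧ IsCompact K ∧
      μ (s n) ≤ μ K + (1 : ℝ≥0∞)/(m+1) := by
    intro n m
    by_cases h : μ (s n) ≤ (1 : ℝ≥0∞)/(m+1)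
    · exact ⟨∅, empty_subset _, isCompact_empty, h.trans le_add_self⟩
    push_neg at h
    have hlt : μ (s n) - (1 : ℝ≥0∞)/(m+1) < μ (s n) :=
      ENNReal.sub_lt_self (s_fin n) (pos_of_gt h).ne'
        (by simp [ENNReal.div_eq_zero_iff])
    obtain ⟨K, hK1, hK2, hK3⟩ := (s_meas n).exists_lt_isCompact_of_ne_top (s_fin n) hlt
    refine ⟨K, hK1, hK2, ?_⟩
    rw [ENNReal.sub_lt_iff_lt_right (by simp [ENNReal.div_eq_top]) h.le] at hK3
    exact hK3.le
  choose K hK_sub hK_comp hK_meas using approx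
  -- the sigma-compact "support"
  set T : Set G := ⋃ n, ⋃ m, K n m with hT
  have T_meas : MeasurableSet T :=
    MeasurableSet.iUnion fun n => MeasurableSet.iUnion fun m =>
      (hK_comp n m).isClosed.measurableSet
  have hZ : ∀ n, μ (s n \ T) = 0 := by
    intro n
    have key : ∀ m : ℕ, μ (s n \ T) ≤ (1 : ℝ≥0∞)/(m+1) := by
      intro m
      have h1 : μ (s n \ T) ≤ μ (s n \ K n m) :=
        measure_mono (diff_subset_diff_right (fun t ht => Set.mem_iUnion.2 ⟨n, Set.mem_iUnion.2 ⟨m, ht⟩⟩))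
      have h2 : μ (s n \ K n m) = μ (s n) - μ (K n m) :=
        measure_diff (hK_sub n m) (hK_comp n m).isClosed.measurableSet.nullMeasurableSet
          (((measure_mono (hK_sub n m)).trans_lt (s_fin n).lt_top).ne)
      have h3 : μ (s n) - μ (K n m) ≤ (1 : ℝ≥0∞)/(m+1) :=
        tsub_le_iff_right.2 (by rw [add_comm]; exact hK_meas n m)
      exact h1.trans (h2.trans_le h3)
    by_contra hne
    obtain ⟨m, hm⟩ := ENNReal.exists_inv_nat_lt hne
    have : (1 : ℝ≥0∞)/(m+1) ≤ ((m : ℝ≥0∞))⁻¹ := by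
      rw [one_div]
      exact ENNReal.inv_le_inv.2 le_self_add
    exact absurd ((key m).trans this) (not_le.2 hm)
  -- the function truncated to T
  set ζ₀ : G → F := T.indicator ξ with hζ₀
  have hξζ₀ : ξ =ᵐ[μ] ζ₀ := by
    have hsub : {t | ξ t ≠ ζ₀ t} ⊆ (⋃ n, s n) \ T := by
      intro t ht
      simp only [Set.mem_setOf_eq] at ht
      by_cases htT : t ∈ T
      · exact absurd (Set.indicator_of_mem htT ξ).symm ht
      · have hξt : ξ t ≠ 0 := by
          intro h0
          exact ht (by rw [h0, hζ₀, Set.indicator_of_notMem htT])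
        obtain ⟨n, hn⟩ := s_cover t hξt
        exact ⟨Set.mem_iUnion.2 ⟨n, hn⟩, htT⟩
    have : μ ((⋃ n, s n) \ T) = 0 := by
      have : (⋃ n, s n) \ T ⊆ ⋃ n, (s n \ T) := by
        intro t ⟨ht1, ht2⟩
        obtain ⟨n, hn⟩ := Set.mem_iUnion.1 ht1
        exact Set.mem_iUnion.2 ⟨n, hn, ht2⟩
      exact measure_mono_null this (measure_iUnion_null hZ)
    exact measure_mono_null hsub this
  -- increasing compact truncations
  set C' : ℕ → Set G := fun k =>
    ⋃ i ∈ Finset.range (k+1), K (Nat.unpair i).1 (Nat.unpair i).2 with hC'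
  have C'_comp : ∀ k, IsCompact (C' k) :=
    fun k => (Finset.range (k+1)).isCompact_biUnion fun i _ => hK_comp _ _
  have C'_subT : ∀ k, C' k ⊆ T := by
    intro k t ht
    simp only [hC', Set.mem_iUnion] at ht
    obtain ⟨i, _, hi⟩ := ht
    exact Set.mem_iUnion.2 ⟨(Nat.unpair i).1, Set.mem_iUnion.2 ⟨(Nat.unpair i).2, hi⟩⟩
  set ζk : ℕ → G → F := fun k => (C' k).indicator ξ with hζk
  have hζk_aesm : ∀ k, AEStronglyMeasurable (fun t => (π t).symm (ζk k t)) μ := by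
    intro k
    apply aux_inv_aesm μ π hmeas
      (hξ_sm.indicator (C'_comp k).isClosed.measurableSet) (C'_comp k)
    intro t ht
    exact Set.indicator_of_notMem ht ξ
  have htend : ∀ t, Filter.Tendsto (fun k => (π t).symm (ζk k t)) Filter.atTop
      (nhds ((π t).symm (ζ₀ t))) := by
    intro t
    apply Filter.Tendsto.congr' _ tendsto_const_nhds
    by_cases htT : t ∈ T
    · obtain ⟨n, hn⟩ := Set.mem_iUnion.1 htT
      obtain ⟨m, hm⟩ := Set.mem_iUnion.1 hn
      filter_upwards [Filter.eventually_ge_atTop (Nat.pair n m)] with k hk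
      have htC' : t ∈ C' k := by
        simp only [hC', Set.mem_iUnion]
        exact ⟨Nat.pair n m, Finset.mem_range.2 (Nat.lt_succ_of_le hk),
          by rw [Nat.unpair_pair]; exact hm⟩
      simp only [hζk, hζ₀, Set.indicator_of_mem htC', Set.indicator_of_mem htT]
    · apply Filter.Eventually.of_forall
      intro k
      simp only [hζk, hζ₀, Set.indicator_of_notMem (fun h => htT (C'_subT k h)),
        Set.indicator_of_notMem htT]
  have h₀ : AEStronglyMeasurable (fun t => (π t).symm (ζ₀ t)) μ :=
    aestronglyMeasurable_of_tendsto_ae Filter.atTop hζk_aesm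
      (Filter.Eventually.of_forall htend)
  apply h₀.congr
  filter_upwards [hζae, hξζ₀] with t h1 h2
  rw [← h2, ← h1]

/-- `L^p`-version of Fell's absorption principle: for an isometric representation
`π` of a locally compact group `G` on a Banach space `F` (compatible with a.e.
strong measurability), the operator `V : η ↦ (t ↦ π(t)(η(t)))` is a surjective
linear isometry of `L^p(G, μ; F)` intertwining `λ_p ⊗ id` with `λ_p ⊗ π`. -/
theorem Lp_Fell_absorption
    {G : Type*} [Group G] [TopologicalSpace G] [IsTopologicalGroup G]
    [LocallyCompactSpace G] [T2Space G] [MeasurableSpace G] [BorelSpace G]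
    (μ : Measure G) [μ.IsHaarMeasure] [μ.Regular]
    {F : Type*} [NormedAddCommGroup F] [NormedSpace ℂ F] [CompleteSpace F]
    (p : ℝ≥0∞) [Fact (1 ≤ p)] (hp : p ≠ ⊤)
    (π : G →* (F ≃ₗᵢ[ℂ] F))
    (hmeas : ∀ η : G → F, AEStronglyMeasurable η μ →
      AEStronglyMeasurable (fun t => π t (η t)) μ) :
    ∃ V : Lp F p μ ≃ₗᵢ[ℂ] Lp F p μ,
      (∀ η : Lp F p μ, (V η : G → F) =ᵐ[μ] fun t => π t (η t)) ∧
      ∀ (s : G) (η η' : Lp F p μ), ((η' : G → F) =ᵐ[μ] fun t => η (s⁻¹ * t)) →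
        ((V η' : G → F) =ᵐ[μ] fun t => π s ((V η : G → F) (s⁻¹ * t))) := by
  have hp0 : p ≠ 0 := (lt_of_lt_of_le zero_lt_one (Fact.out : 1 ≤ p)).ne'
  have fwd : ∀ η : Lp F p μ, MemLp (fun t => π t ((η : G → F) t)) p μ := fun η =>
    (Lp.memLp η).of_le (hmeas _ (Lp.aestronglyMeasurable η))
      (Filter.Eventually.of_forall fun t => by
        simp)
  have bwd : ∀ η : Lp F p μ, MemLp (fun t => (π t).symm ((η : G → F) t)) p μ := fun η =>
    (Lp.memLp η).of_le (aux_inv_aesm_Lp μ hp0 hp π hmeas (Lp.memLp η))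
      (Filter.Eventually.of_forall fun t => by simp)
  set Vf : Lp F p μ → Lp F p μ := fun η => (fwd η).toLp _ with hVf
  set Wf : Lp F p μ → Lp F p μ := fun η => (bwd η).toLp _ with hWf
  have hV : ∀ η, (Vf η : G → F) =ᵐ[μ] fun t => π t ((η : G → F) t) := fun η =>
    (fwd η).coeFn_toLp
  have hW : ∀ η, (Wf η : G → F) =ᵐ[μ] fun t => (π t).symm ((η : G → F) t) := fun η =>
    (bwd η).coeFn_toLp
  have left_inv : ∀ η, Wf (Vf η) = η := by
    intro η
    apply Lp.ext
    filter_upwards [hW (Vf η), hV η] with t h1 h2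
    rw [h1, h2, LinearIsometryEquiv.symm_apply_apply]
  have right_inv : ∀ η, Vf (Wf η) = η := by
    intro η
    apply Lp.ext
    filter_upwards [hV (Wf η), hW η] with t h1 h2
    rw [h1, h2, LinearIsometryEquiv.apply_symm_apply]
  have map_add : ∀ η ξ, Vf (η + ξ) = Vf η + Vf ξ := by
    intro η ξ
    apply Lp.ext
    filter_upwards [hV (η + ξ), hV η, hV ξ, Lp.coeFn_add η ξ,
      Lp.coeFn_add (Vf η) (Vf ξ)] with t h1 h2 h3 h4 h5
    rw [h5, Pi.add_apply, h1, h4, Pi.add_apply, map_add, h2, h3]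
  have map_smul : ∀ (c : ℂ) η, Vf (c • η) = c • Vf η := by
    intro c η
    apply Lp.ext
    filter_upwards [hV (c • η), hV η, Lp.coeFn_smul c η,
      Lp.coeFn_smul c (Vf η)] with t h1 h2 h3 h4
    rw [h4, Pi.smul_apply, h1, h3, Pi.smul_apply, _root_.map_smul, h2]
  have norm_map : ∀ η, ‖Vf η‖ = ‖η‖ := by
    intro η
    rw [Lp.norm_def, Lp.norm_def]
    congr 1
    rw [eLpNorm_congr_ae (hV η)]
    exact eLpNorm_congr_norm_ae (Filter.Eventually.of_forall fun t => by simp)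
  refine ⟨⟨⟨⟨⟨Vf, map_add⟩, fun c η => map_smul c η⟩, Wf, left_inv, right_inv⟩,
    norm_map⟩, fun η => hV η, ?_⟩
  intro s η η' hηη'
  have qmp : Measure.QuasiMeasurePreserving (fun t : G => s⁻¹ * t) μ μ :=
    (measurePreserving_mul_left μ s⁻¹).quasiMeasurePreserving
  have e3 := qmp.ae_eq_comp (hV η)
  have key : ∀ t (x : F), π s (π (s⁻¹ * t) x) = π t x := by
    intro t x
    have : π s ((π (s⁻¹ * t)) x) = ((π s) * (π (s⁻¹ * t))) x := rfl
    rw [this, ← map_mul, mul_inv_cancel_left]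
  calc (Vf η' : G → F)
      =ᵐ[μ] fun t => π t ((η' : G → F) t) := hV η'
    _ =ᵐ[μ] fun t => π t ((η : G → F) (s⁻¹ * t)) := hηη'.mono fun t ht => _root_.congrArg (π t) ht
    _ =ᵐ[μ] fun t => π s ((Vf η : G → F) (s⁻¹ * t)) := by
        filter_upwards [e3] with t ht
        show π t ((η : G → F) (s⁻¹ * t)) = π s ((Vf η : G → F) (s⁻¹ * t))
        have ht' : (Vf η : G → F) (s⁻¹ * t) = π (s⁻¹ * t) ((η : G → F) (s⁻¹ * t)) := ht
        rw [ht', key]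
end

section
/- A weakly mixing probability-measure-preserving action has weakly mixing Koopman representation on L^p_0: let Γ be an infinite group acting measurably on a probability space (Ω, μ) such that x ↦ g • x is measure-preserving for every g ∈ Γ, and assume the action is weakly mixing, i.e. for every finite family 𝓕 of measurable subsets of Ω, the liminf along the cofinite filter on Γ of the function g ↦ ∑_{A, B ∈ 𝓕} |μ(A ∩ g•B) − μ(A)·μ(B)| (with measures taken as real numbers) equals 0. Let 1 ≤ p < ∞ and let q be the conjugate exponent (1/p + 1/q = 1). Then for every finite family ξ₁, …, ξ_m : Ω → ℂ of functions in L^p(μ) with ∫ ξᵢ dμ = 0, every finite family η₁, …, η_k : Ω → ℂ of functions in L^q(μ) with ∫ ηⱼ dμ = 0, and every ε > 0, there exists t ∈ Γ such that |∫ ξᵢ(t⁻¹ • x) · conj(ηⱼ(x)) dμ(x)| < ε for all i ∈ {1,…,m} and j ∈ {1,…,k}. -/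
set_option maxHeartbeats 1000000

open MeasureTheory ENNReal Pointwise

section KoopmanHelpers

variable {Ω : Type*} [MeasurableSpace Ω] {μ : Measure Ω}

private lemma memLp_conj' {q : ℝ≥0∞} {h : Ω → ℂ} (hh : MemLp h q μ) :
    MemLp (fun x => (starRingEnd ℂ) (h x)) q μ := by
  refine ⟨RCLike.continuous_conj.comp_aestronglyMeasurable hh.1, ?_⟩
  have he : eLpNorm (fun x => (starRingEnd ℂ) (h x)) q μ = eLpNorm h q μ := by
    rw [← eLpNorm_norm (fun x => (starRingEnd ℂ) (h x)), ← eLpNorm_norm h]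
    congr 1
    funext x
    exact RCLike.norm_conj _
  rw [he]
  exact hh.2

private lemma holder_pair' {p q : ℝ≥0∞} (hpq : 1/p + 1/q = 1) {f h : Ω → ℂ}
    (hf : MemLp f p μ) (hh : MemLp h q μ) :
    Integrable (fun x => f x * (starRingEnd ℂ) (h x)) μ ∧
    ‖∫ x, f x * (starRingEnd ℂ) (h x) ∂μ‖ ≤
      (eLpNorm f p μ).toReal * (eLpNorm h q μ).toReal := by
  have hh' : MemLp (fun x => (starRingEnd ℂ) (h x)) q μ := memLp_conj' hh
  have key : eLpNorm (fun x => f x * (starRingEnd ℂ) (h x)) 1 μ ≤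
      eLpNorm f p μ * eLpNorm (fun x => (starRingEnd ℂ) (h x)) q μ := by
    haveI : ENNReal.HolderTriple p q 1 := ⟨by simpa only [one_div, inv_one] using hpq⟩
    have := eLpNorm_le_eLpNorm_mul_eLpNorm'_of_norm (p := p) (q := q) (r := 1) hf.1 hh'.1 (· * ·) 1
      (Filter.Eventually.of_forall fun x => by simp only [NNReal.coe_one, one_mul, norm_mul, le_refl])
    rwa [ENNReal.coe_one, one_mul] at this
  have hq' : eLpNorm (fun x => (starRingEnd ℂ) (h x)) q μ = eLpNorm h q μ := by
    rw [← eLpNorm_norm (fun x => (starRingEnd ℂ) (h x)), ← eLpNorm_norm h]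
    congr 1; funext x; exact RCLike.norm_conj _
  have hmem : MemLp (fun x => f x * (starRingEnd ℂ) (h x)) 1 μ :=
    ⟨hf.1.mul hh'.1, key.trans_lt (ENNReal.mul_lt_top hf.2 hh'.2)⟩
  have hint : Integrable (fun x => f x * (starRingEnd ℂ) (h x)) μ :=
    memLp_one_iff_integrable.mp hmem
  refine ⟨hint, ?_⟩
  calc ‖∫ x, f x * (starRingEnd ℂ) (h x) ∂μ‖
      ≤ ∫ x, ‖f x * (starRingEnd ℂ) (h x)‖ ∂μ := norm_integral_le_integral_norm _
    _ = (eLpNorm (fun x => f x * (starRingEnd ℂ) (h x)) 1 μ).toReal := by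
        rw [integral_norm_eq_lintegral_enorm hint.aestronglyMeasurable,
          eLpNorm_one_eq_lintegral_enorm]
    _ ≤ (eLpNorm f p μ * eLpNorm (fun x => (starRingEnd ℂ) (h x)) q μ).toReal :=
        ENNReal.toReal_mono (ENNReal.mul_ne_top hf.2.ne hh'.2.ne) key
    _ = (eLpNorm f p μ).toReal * (eLpNorm h q μ).toReal := by
        rw [ENNReal.toReal_mul, hq']

variable {Γ : Type*} [Group Γ] [MulAction Γ Ω]

private lemma smul_set_measurable' (hmp : ∀ g : Γ, MeasurePreserving (fun x : Ω => g • x) μ μ)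
    (g : Γ) {A : Set Ω} (hA : MeasurableSet A) : MeasurableSet (g • A) := by
  have h : g • A = (fun x : Ω => g⁻¹ • x) ⁻¹' A := by
    rw [Set.preimage_smul, inv_inv]
  rw [h]
  exact (hmp g⁻¹).measurable hA

private lemma pairing_eq' [IsFiniteMeasure μ]
    (hmp : ∀ g : Γ, MeasurePreserving (fun x : Ω => g • x) μ μ)
    (g : Γ) (φ ψ : SimpleFunc Ω ℂ) :
    ∫ x, φ (g⁻¹ • x) * (starRingEnd ℂ) (ψ x) ∂μ =
      ∑ c ∈ φ.range, ∑ d ∈ ψ.range,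
        (μ (g • (⇑φ ⁻¹' {c}) ∩ ⇑ψ ⁻¹' {d})).toReal • (c * (starRingEnd ℂ) d) := by
  have hmeas : ∀ c d : ℂ, MeasurableSet (g • (⇑φ ⁻¹' {c}) ∩ ⇑ψ ⁻¹' {d}) :=
    fun c d => (smul_set_measurable' hmp g (φ.measurableSet_fiber c)).inter
      (ψ.measurableSet_fiber d)
  have hfun : (fun x => φ (g⁻¹ • x) * (starRingEnd ℂ) (ψ x)) =
      fun x => ∑ c ∈ φ.range, ∑ d ∈ ψ.range,
        Set.indicator (g • (⇑φ ⁻¹' {c}) ∩ ⇑ψ ⁻¹' {d})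
          (fun _ => c * (starRingEnd ℂ) d) x := by
    funext x
    have hx : ∀ c d : ℂ, Set.indicator (g • (⇑φ ⁻¹' {c}) ∩ ⇑ψ ⁻¹' {d})
        (fun _ => c * (starRingEnd ℂ) d) x =
        (if c = φ (g⁻¹ • x) then c else 0) * (if d = ψ x then (starRingEnd ℂ) d else 0) := by
      intro c d
      classical
      rw [Set.indicator_apply]
      have hmem : x ∈ g • (⇑φ ⁻¹' {c}) ∩ ⇑ψ ⁻¹' {d} ↔ (c = φ (g⁻¹ • x) ∧ d = ψ x) := by
        simp [Set.mem_smul_set_iff_inv_smul_mem, eq_comm]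
      rw [if_congr hmem rfl rfl]
      by_cases h1 : c = φ (g⁻¹ • x) <;> by_cases h2 : d = ψ x <;> simp [h1, h2]
    simp only [hx]
    rw [← Finset.sum_mul_sum]
    rw [Finset.sum_ite_eq' φ.range (φ (g⁻¹ • x)) (fun c => c),
      Finset.sum_ite_eq' ψ.range (ψ x) (fun d => (starRingEnd ℂ) d)]
    simp [SimpleFunc.mem_range_self]
  rw [hfun]
  rw [integral_finset_sum _ (fun c _ => integrable_finset_sum _
    (fun d _ => (integrable_const _).indicator (hmeas c d)))]
  refine Finset.sum_congr rfl fun c _ => ?_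
  rw [integral_finset_sum _ (fun d _ => (integrable_const _).indicator (hmeas c d))]
  exact Finset.sum_congr rfl fun d _ => integral_indicator_const _ (hmeas c d)

private lemma fiber_inj (φ : SimpleFunc Ω ℂ) :
    ∀ c ∈ φ.range, ∀ c' ∈ φ.range, (⇑φ ⁻¹' {c} : Set Ω) = ⇑φ ⁻¹' {c'} → c = c' := by
  intro c hc c' _ h
  obtain ⟨a, ha⟩ := SimpleFunc.mem_range.mp hc
  have h1 : a ∈ (⇑φ ⁻¹' {c} : Set Ω) := by simp [ha]
  rw [h] at h1
  simp only [Set.mem_preimage, Set.mem_singleton_iff] at h1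
  rw [← ha, h1]

private lemma sum_le_of_subsets {α : Type*} {s t u : Finset α} (hs : s ⊆ u) (ht : t ⊆ u)
    {F : α → α → ℝ} (hF : ∀ a b, 0 ≤ F a b) :
    ∑ a ∈ s, ∑ b ∈ t, F a b ≤ ∑ a ∈ u, ∑ b ∈ u, F a b :=
  calc ∑ a ∈ s, ∑ b ∈ t, F a b
      ≤ ∑ a ∈ s, ∑ b ∈ u, F a b :=
        Finset.sum_le_sum fun a _ =>
          Finset.sum_le_sum_of_subset_of_nonneg ht fun b _ _ => hF a b
    _ ≤ ∑ a ∈ u, ∑ b ∈ u, F a b :=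
        Finset.sum_le_sum_of_subset_of_nonneg hs fun a _ _ =>
          Finset.sum_nonneg fun b _ => hF a b

end KoopmanHelpers

/-- A weakly mixing probability-measure-preserving action of an infinite group
has weakly mixing Koopman representation on zero-mean `L^p`: for finitely many
zero-mean `ξᵢ ∈ L^p(μ)` and zero-mean `ηⱼ ∈ L^q(μ)` (`q` the conjugate exponent
of `p`) and every `ε > 0`, there is `t ∈ Γ` with
`|∫ ξᵢ(t⁻¹ • x) conj(ηⱼ(x)) dμ(x)| < ε` for all `i, j`. -/
theorem weakMixing_action_koopman_weakMixing
    {Γ : Type*} [Group Γ] [Infinite Γ]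
    {Ω : Type*} [MeasurableSpace Ω] (μ : Measure Ω) [IsProbabilityMeasure μ]
    [MulAction Γ Ω]
    (hmp : ∀ g : Γ, MeasurePreserving (fun x : Ω => g • x) μ μ)
    (hwm : ∀ 𝓕 : Finset (Set Ω), (∀ A ∈ 𝓕, MeasurableSet A) →
      Filter.liminf (fun g : Γ => ∑ A ∈ 𝓕, ∑ B ∈ 𝓕,
        |(μ (A ∩ g • B)).toReal - (μ A).toReal * (μ B).toReal|) Filter.cofinite = 0)
    (p q : ℝ≥0∞) (hp : 1 ≤ p) (hp' : p ≠ ⊤) (hpq : 1 / p + 1 / q = 1)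
    {m k : ℕ}
    (ξ : Fin m → Ω → ℂ) (hξ : ∀ i, MemLp (ξ i) p μ) (hξ0 : ∀ i, ∫ x, ξ i x ∂μ = 0)
    (η : Fin k → Ω → ℂ) (hη : ∀ j, MemLp (η j) q μ) (hη0 : ∀ j, ∫ x, η j x ∂μ = 0)
    (ε : ℝ) (hε : 0 < ε) :
    ∃ t : Γ, ∀ (i : Fin m) (j : Fin k),
      ‖∫ x, ξ i (t⁻¹ • x) * (starRingEnd ℂ) (η j x) ∂μ‖ < ε := by
  classical
  have hq1 : 1 ≤ q := by
    have h : 1 / q ≤ 1 / p + 1 / q := le_add_of_nonneg_left zero_le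
    rw [hpq] at h
    rwa [one_div, ENNReal.inv_le_one] at h
  -- the constant controlling the norms of the η's
  set Cη : ℝ := 1 + ∑ j, (eLpNorm (η j) q μ).toReal with hCηdef
  have hCηsum : 0 ≤ ∑ j, (eLpNorm (η j) q μ).toReal :=
    Finset.sum_nonneg fun _ _ => ENNReal.toReal_nonneg
  have hCηpos : 0 < Cη := by rw [hCηdef]; linarith
  have hCηle : ∀ j, (eLpNorm (η j) q μ).toReal ≤ Cη := by
    intro j
    have h := Finset.single_le_sum (f := fun j => (eLpNorm (η j) q μ).toReal)
      (fun j _ => ENNReal.toReal_nonneg) (Finset.mem_univ j)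
    rw [hCηdef]; linarith
  set δ₁ : ℝ := ε / (4 * Cη) with hδ₁def
  have hδ₁pos : 0 < δ₁ := div_pos hε (by linarith)
  -- approximate the ξ's by simple functions in L^p
  have hφex : ∀ i, ∃ φ0 : SimpleFunc Ω ℂ,
      eLpNorm (ξ i - ⇑φ0) p μ < ENNReal.ofReal δ₁ ∧ MemLp ⇑φ0 p μ :=
    fun i => (hξ i).exists_simpleFunc_eLpNorm_sub_lt hp'
      (ENNReal.ofReal_pos.mpr hδ₁pos).ne'
  choose φ hφ hφmem using hφex
  set Mφ : ℝ := 1 + ∑ i, ∑ c ∈ (φ i).range, ‖c‖ with hMφdef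
  have hMφsum : 0 ≤ ∑ i, ∑ c ∈ (φ i).range, ‖c‖ :=
    Finset.sum_nonneg fun _ _ => Finset.sum_nonneg fun _ _ => norm_nonneg _
  have hMφ1 : 1 ≤ Mφ := by rw [hMφdef]; linarith
  have hMφc : ∀ i, ∀ c ∈ (φ i).range, ‖c‖ ≤ Mφ := by
    intro i c hc
    have h1 : ‖c‖ ≤ ∑ c' ∈ (φ i).range, ‖c'‖ :=
      Finset.single_le_sum (f := fun c' => ‖c'‖) (fun _ _ => norm_nonneg _) hc
    have h2 : ∑ c' ∈ (φ i).range, ‖c'‖ ≤ ∑ i', ∑ c' ∈ (φ i').range, ‖c'‖ :=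
      Finset.single_le_sum (f := fun i' => ∑ c' ∈ (φ i').range, ‖c'‖)
        (fun _ _ => Finset.sum_nonneg fun _ _ => norm_nonneg _) (Finset.mem_univ i)
    rw [hMφdef]; linarith
  set δ₂ : ℝ := ε / (8 * (Mφ + δ₁)) with hδ₂def
  have hMδpos : 0 < Mφ + δ₁ := by linarith
  have hδ₂pos : 0 < δ₂ := div_pos hε (by linarith)
  -- approximate the η's by simple functions in L¹
  have hη1 : ∀ j, MemLp (η j) 1 μ := fun j => (hη j).mono_exponent hq1
  have hψex : ∀ j, ∃ ψ0 : SimpleFunc Ω ℂ,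
      eLpNorm (η j - ⇑ψ0) 1 μ < ENNReal.ofReal δ₂ ∧ MemLp ⇑ψ0 1 μ :=
    fun j => (hη1 j).exists_simpleFunc_eLpNorm_sub_lt one_ne_top
      (ENNReal.ofReal_pos.mpr hδ₂pos).ne'
  choose ψ hψ hψmem using hψex
  set Mψ : ℝ := 1 + ∑ j, ∑ d ∈ (ψ j).range, ‖d‖ with hMψdef
  have hMψsum : 0 ≤ ∑ j, ∑ d ∈ (ψ j).range, ‖d‖ :=
    Finset.sum_nonneg fun _ _ => Finset.sum_nonneg fun _ _ => norm_nonneg _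
  have hMψ1 : 1 ≤ Mψ := by rw [hMψdef]; linarith
  have hMψc : ∀ j, ∀ d ∈ (ψ j).range, ‖d‖ ≤ Mψ := by
    intro j d hd
    have h1 : ‖d‖ ≤ ∑ d' ∈ (ψ j).range, ‖d'‖ :=
      Finset.single_le_sum (f := fun d' => ‖d'‖) (fun _ _ => norm_nonneg _) hd
    have h2 : ∑ d' ∈ (ψ j).range, ‖d'‖ ≤ ∑ j', ∑ d' ∈ (ψ j').range, ‖d'‖ :=
      Finset.single_le_sum (f := fun j' => ∑ d' ∈ (ψ j').range, ‖d'‖)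
        (fun _ _ => Finset.sum_nonneg fun _ _ => norm_nonneg _) (Finset.mem_univ j)
    rw [hMψdef]; linarith
  have hMM : 0 < Mφ * Mψ := by nlinarith
  set δ₃ : ℝ := ε / (2 * (Mφ * Mψ)) with hδ₃def
  have hδ₃pos : 0 < δ₃ := div_pos hε (by nlinarith)
  -- the finite family of level sets
  set 𝓕 : Finset (Set Ω) :=
    (Finset.univ.biUnion fun i : Fin m => (φ i).range.image fun c => ⇑(φ i) ⁻¹' {c}) ∪
    (Finset.univ.biUnion fun j : Fin k => (ψ j).range.image fun d => ⇑(ψ j) ⁻¹' {d})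
    with h𝓕def
  have h𝓕meas : ∀ A ∈ 𝓕, MeasurableSet A := by
    intro A hA
    rw [h𝓕def, Finset.mem_union] at hA
    rcases hA with hA | hA
    · rw [Finset.mem_biUnion] at hA
      obtain ⟨i, -, hA⟩ := hA
      rw [Finset.mem_image] at hA
      obtain ⟨c, -, rfl⟩ := hA
      exact (φ i).measurableSet_fiber c
    · rw [Finset.mem_biUnion] at hA
      obtain ⟨j, -, hA⟩ := hA
      rw [Finset.mem_image] at hA
      obtain ⟨d, -, rfl⟩ := hA
      exact (ψ j).measurableSet_fiber d
  set S : Γ → ℝ := fun g => ∑ A ∈ 𝓕, ∑ B ∈ 𝓕,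
    |(μ (A ∩ g • B)).toReal - (μ A).toReal * (μ B).toReal| with hSdef
  -- find a good group element
  obtain ⟨t, hSt⟩ : ∃ t : Γ, S t < δ₃ := by
    have hSbd : ∀ g, S g ≤ (𝓕.card : ℝ) * 𝓕.card := by
      intro g
      have hterm : ∀ A B : Set Ω,
          |(μ (A ∩ g • B)).toReal - (μ A).toReal * (μ B).toReal| ≤ 1 := by
        intro A B
        have h1 : ∀ s : Set Ω, (μ s).toReal ≤ 1 := fun s => by
          simpa using ENNReal.toReal_mono one_ne_top (prob_le_one (μ := μ) (s := s))
        have h0 : ∀ s : Set Ω, 0 ≤ (μ s).toReal := fun s => ENNReal.toReal_nonneg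
        rw [abs_le]
        constructor <;>
          nlinarith [h1 (A ∩ g • B), h0 (A ∩ g • B), h1 A, h1 B, h0 A, h0 B]
      calc S g ≤ ∑ A ∈ 𝓕, ∑ B ∈ 𝓕, (1 : ℝ) :=
            Finset.sum_le_sum fun A _ => Finset.sum_le_sum fun B _ => hterm A B
        _ = (𝓕.card : ℝ) * 𝓕.card := by simp [mul_comm]
    have hco : Filter.IsCoboundedUnder (· ≥ ·) Filter.cofinite S :=
      Filter.isCoboundedUnder_ge_of_le _ hSbd
    have hlim : Filter.liminf S Filter.cofinite = 0 := by
      rw [hSdef]; exact hwm 𝓕 h𝓕meas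
    have hfr := Filter.frequently_lt_of_liminf_lt hco (by rw [hlim]; exact hδ₃pos)
    exact hfr.exists
  refine ⟨t, fun i j => ?_⟩
  have hT : MeasurePreserving (fun x : Ω => t⁻¹ • x) μ μ := hmp t⁻¹
  -- term 1 : Hölder
  have hξφ : MemLp (fun x => (ξ i - ⇑(φ i)) (t⁻¹ • x)) p μ :=
    MemLp.comp_measurePreserving ((hξ i).sub (hφmem i)) hT
  have hξφnorm : eLpNorm (fun x => (ξ i - ⇑(φ i)) (t⁻¹ • x)) p μ
      = eLpNorm (ξ i - ⇑(φ i)) p μ :=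
    eLpNorm_comp_measurePreserving ((hξ i).sub (hφmem i)).1 hT
  obtain ⟨hint1, hbd1⟩ := holder_pair' hpq hξφ (hη j)
  have hbd1' : ‖∫ x, (ξ i - ⇑(φ i)) (t⁻¹ • x) * (starRingEnd ℂ) (η j x) ∂μ‖
      ≤ δ₁ * Cη := by
    refine hbd1.trans ?_
    have ha : (eLpNorm (fun x => (ξ i - ⇑(φ i)) (t⁻¹ • x)) p μ).toReal ≤ δ₁ := by
      rw [hξφnorm]
      exact ENNReal.toReal_le_of_le_ofReal hδ₁pos.le (hφ i).le
    exact mul_le_mul ha (hCηle j) ENNReal.toReal_nonneg hδ₁pos.le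
  -- term 2 : bounded × small L¹
  have hηψ1 : MemLp (η j - ⇑(ψ j)) 1 μ := (hη1 j).sub (hψmem j)
  have hηψint : Integrable (fun x => (η j - ⇑(ψ j)) x) μ := memLp_one_iff_integrable.mp hηψ1
  have hconjint : Integrable (fun x => (starRingEnd ℂ) ((η j - ⇑(ψ j)) x)) μ :=
    memLp_one_iff_integrable.mp (memLp_conj' hηψ1)
  have hφT : AEStronglyMeasurable (fun x => φ i (t⁻¹ • x)) μ :=
    ((φ i).measurable.comp hT.measurable).aestronglyMeasurable
  have hMφx : ∀ x, ‖φ i (t⁻¹ • x)‖ ≤ Mφ := fun x => hMφc i _ (SimpleFunc.mem_range_self _ _)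
  have hint2 : Integrable (fun x => φ i (t⁻¹ • x) * (starRingEnd ℂ) ((η j - ⇑(ψ j)) x)) μ :=
    hconjint.bdd_mul hφT (Filter.Eventually.of_forall hMφx)
  have hbd2 : ‖∫ x, φ i (t⁻¹ • x) * (starRingEnd ℂ) ((η j - ⇑(ψ j)) x) ∂μ‖ ≤ Mφ * δ₂ := by
    have hnrm : ∫ x, ‖(η j - ⇑(ψ j)) x‖ ∂μ ≤ δ₂ := by
      rw [integral_norm_eq_lintegral_enorm hηψint.aestronglyMeasurable,
        ← eLpNorm_one_eq_lintegral_enorm]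
      exact ENNReal.toReal_le_of_le_ofReal hδ₂pos.le (hψ j).le
    calc ‖∫ x, φ i (t⁻¹ • x) * (starRingEnd ℂ) ((η j - ⇑(ψ j)) x) ∂μ‖
        ≤ ∫ x, ‖φ i (t⁻¹ • x) * (starRingEnd ℂ) ((η j - ⇑(ψ j)) x)‖ ∂μ :=
          norm_integral_le_integral_norm _
      _ ≤ ∫ x, Mφ * ‖(η j - ⇑(ψ j)) x‖ ∂μ := by
          refine integral_mono hint2.norm (hηψint.norm.const_mul Mφ) fun x => ?_
          rw [norm_mul, RCLike.norm_conj]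
          exact mul_le_mul_of_nonneg_right (hMφx x) (norm_nonneg _)
      _ = Mφ * ∫ x, ‖(η j - ⇑(ψ j)) x‖ ∂μ := integral_const_mul Mφ _
      _ ≤ Mφ * δ₂ := mul_le_mul_of_nonneg_left hnrm (by linarith)
  -- the integrals of φ and ψ are small
  have hξiint : Integrable (ξ i) μ := memLp_one_iff_integrable.mp ((hξ i).mono_exponent hp)
  have hφiint : Integrable ⇑(φ i) μ :=
    memLp_one_iff_integrable.mp ((hφmem i).mono_exponent hp)
  have hηjint : Integrable (η j) μ := memLp_one_iff_integrable.mp (hη1 j)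
  have hψjint : Integrable ⇑(ψ j) μ := memLp_one_iff_integrable.mp (hψmem j)
  have hintφ : ‖∫ x, φ i x ∂μ‖ ≤ δ₁ := by
    have h1 : ∫ x, (ξ i - ⇑(φ i)) x ∂μ = - ∫ x, φ i x ∂μ := by
      simp only [Pi.sub_apply]
      rw [integral_sub hξiint hφiint, hξ0 i, zero_sub]
    have h2 : (eLpNorm (ξ i - ⇑(φ i)) 1 μ).toReal ≤ δ₁ := by
      have hle := eLpNorm_le_eLpNorm_of_exponent_le hp ((hξ i).sub (hφmem i)).1
      exact ENNReal.toReal_le_of_le_ofReal hδ₁pos.le (hle.trans (hφ i).le)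
    calc ‖∫ x, φ i x ∂μ‖ = ‖∫ x, (ξ i - ⇑(φ i)) x ∂μ‖ := by rw [h1, norm_neg]
      _ ≤ ∫ x, ‖(ξ i - ⇑(φ i)) x‖ ∂μ := norm_integral_le_integral_norm _
      _ = (eLpNorm (ξ i - ⇑(φ i)) 1 μ).toReal := by
          rw [integral_norm_eq_lintegral_enorm ((hξ i).sub (hφmem i)).1,
            eLpNorm_one_eq_lintegral_enorm]
      _ ≤ δ₁ := h2
  have hintψ : ‖∫ x, ψ j x ∂μ‖ ≤ δ₂ := by
    have h1 : ∫ x, (η j - ⇑(ψ j)) x ∂μ = - ∫ x, ψ j x ∂μ := by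
      simp only [Pi.sub_apply]
      rw [integral_sub hηjint hψjint, hη0 j, zero_sub]
    have h2 : (eLpNorm (η j - ⇑(ψ j)) 1 μ).toReal ≤ δ₂ :=
      ENNReal.toReal_le_of_le_ofReal hδ₂pos.le (hψ j).le
    calc ‖∫ x, ψ j x ∂μ‖ = ‖∫ x, (η j - ⇑(ψ j)) x ∂μ‖ := by rw [h1, norm_neg]
      _ ≤ ∫ x, ‖(η j - ⇑(ψ j)) x‖ ∂μ := norm_integral_le_integral_norm _
      _ = (eLpNorm (η j - ⇑(ψ j)) 1 μ).toReal := by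
          rw [integral_norm_eq_lintegral_enorm hηψ1.1, eLpNorm_one_eq_lintegral_enorm]
      _ ≤ δ₂ := h2
  -- term 3 : simple functions with weak mixing
  have hint3 : Integrable (fun x => φ i (t⁻¹ • x) * (starRingEnd ℂ) (ψ j x)) μ :=
    (memLp_one_iff_integrable.mp (memLp_conj' (hψmem j))).bdd_mul hφT (Filter.Eventually.of_forall hMφx)
  have hP := pairing_eq' (μ := μ) hmp t (φ i) (ψ j)
  have hQ : (∫ x, φ i x ∂μ) * (starRingEnd ℂ) (∫ x, ψ j x ∂μ) =
      ∑ c ∈ (φ i).range, ∑ d ∈ (ψ j).range,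
        ((μ (⇑(φ i) ⁻¹' {c})).toReal * (μ (⇑(ψ j) ⁻¹' {d})).toReal)
          • (c * (starRingEnd ℂ) d) := by
    rw [SimpleFunc.integral_eq_sum _ hφiint, SimpleFunc.integral_eq_sum _ hψjint,
      map_sum, Finset.sum_mul_sum]
    refine Finset.sum_congr rfl fun c _ => Finset.sum_congr rfl fun d _ => ?_
    simp only [Complex.real_smul, map_mul, Complex.conj_ofReal, Complex.ofReal_mul, measureReal_def]
    ring
  have hsum : ∑ c ∈ (φ i).range, ∑ d ∈ (ψ j).range,
      |(μ (t • (⇑(φ i) ⁻¹' {c}) ∩ ⇑(ψ j) ⁻¹' {d})).toReal -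
        (μ (⇑(φ i) ⁻¹' {c})).toReal * (μ (⇑(ψ j) ⁻¹' {d})).toReal| ≤ S t := by
    have hre : ∀ c ∈ (φ i).range, ∀ d ∈ (ψ j).range,
        |(μ (t • (⇑(φ i) ⁻¹' {c}) ∩ ⇑(ψ j) ⁻¹' {d})).toReal -
          (μ (⇑(φ i) ⁻¹' {c})).toReal * (μ (⇑(ψ j) ⁻¹' {d})).toReal|
        = |(μ ((⇑(ψ j) ⁻¹' {d}) ∩ t • (⇑(φ i) ⁻¹' {c}))).toReal -
            (μ (⇑(ψ j) ⁻¹' {d})).toReal * (μ (⇑(φ i) ⁻¹' {c})).toReal| := by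
      intro c _ d _
      rw [Set.inter_comm, mul_comm ((μ (⇑(φ i) ⁻¹' {c})).toReal)]
    rw [Finset.sum_congr rfl fun c hc => Finset.sum_congr rfl fun d hd => hre c hc d hd,
      Finset.sum_comm]
    have himg : ∑ d ∈ (ψ j).range, ∑ c ∈ (φ i).range,
        |(μ ((⇑(ψ j) ⁻¹' {d}) ∩ t • (⇑(φ i) ⁻¹' {c}))).toReal -
          (μ (⇑(ψ j) ⁻¹' {d})).toReal * (μ (⇑(φ i) ⁻¹' {c})).toReal|
        = ∑ A ∈ (ψ j).range.image fun d => ⇑(ψ j) ⁻¹' {d},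
            ∑ B ∈ (φ i).range.image fun c => ⇑(φ i) ⁻¹' {c},
              |(μ (A ∩ t • B)).toReal - (μ A).toReal * (μ B).toReal| := by
      rw [Finset.sum_image (fiber_inj (ψ j))]
      refine Finset.sum_congr rfl fun d _ => ?_
      rw [Finset.sum_image (fiber_inj (φ i))]
    rw [himg, hSdef]
    refine sum_le_of_subsets ?_ ?_ (fun _ _ => abs_nonneg _)
    · exact fun A hA => Finset.mem_union_right _
        (Finset.mem_biUnion.mpr ⟨j, Finset.mem_univ j, hA⟩)
    · exact fun B hB => Finset.mem_union_left _
        (Finset.mem_biUnion.mpr ⟨i, Finset.mem_univ i, hB⟩)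
  have hdiff : ‖(∫ x, φ i (t⁻¹ • x) * (starRingEnd ℂ) (ψ j x) ∂μ) -
      (∫ x, φ i x ∂μ) * (starRingEnd ℂ) (∫ x, ψ j x ∂μ)‖ ≤ Mφ * Mψ * S t := by
    rw [hP, hQ, ← Finset.sum_sub_distrib]
    simp only [← Finset.sum_sub_distrib, ← sub_smul]
    calc ‖∑ c ∈ (φ i).range, ∑ d ∈ (ψ j).range,
          ((μ (t • (⇑(φ i) ⁻¹' {c}) ∩ ⇑(ψ j) ⁻¹' {d})).toReal -
            (μ (⇑(φ i) ⁻¹' {c})).toReal * (μ (⇑(ψ j) ⁻¹' {d})).toReal)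
            • (c * (starRingEnd ℂ) d)‖
        ≤ ∑ c ∈ (φ i).range, ∑ d ∈ (ψ j).range,
            |(μ (t • (⇑(φ i) ⁻¹' {c}) ∩ ⇑(ψ j) ⁻¹' {d})).toReal -
              (μ (⇑(φ i) ⁻¹' {c})).toReal * (μ (⇑(ψ j) ⁻¹' {d})).toReal| * (Mφ * Mψ) := by
          refine (norm_sum_le _ _).trans (Finset.sum_le_sum fun c hc =>
            (norm_sum_le _ _).trans (Finset.sum_le_sum fun d hd => ?_))
          rw [norm_smul, Real.norm_eq_abs, norm_mul, RCLike.norm_conj]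
          exact mul_le_mul_of_nonneg_left
            (mul_le_mul (hMφc i c hc) (hMψc j d hd) (norm_nonneg _) (by linarith))
            (abs_nonneg _)
      _ = (∑ c ∈ (φ i).range, ∑ d ∈ (ψ j).range,
            |(μ (t • (⇑(φ i) ⁻¹' {c}) ∩ ⇑(ψ j) ⁻¹' {d})).toReal -
              (μ (⇑(φ i) ⁻¹' {c})).toReal * (μ (⇑(ψ j) ⁻¹' {d})).toReal|) * (Mφ * Mψ) := by
          simp only [← Finset.sum_mul]
      _ ≤ S t * (Mφ * Mψ) := mul_le_mul_of_nonneg_right hsum hMM.le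
      _ = Mφ * Mψ * S t := by ring
  have hbd3 : ‖∫ x, φ i (t⁻¹ • x) * (starRingEnd ℂ) (ψ j x) ∂μ‖
      ≤ Mφ * Mψ * S t + δ₁ * δ₂ := by
    have htr := norm_add_le
      ((∫ x, φ i (t⁻¹ • x) * (starRingEnd ℂ) (ψ j x) ∂μ) -
        (∫ x, φ i x ∂μ) * (starRingEnd ℂ) (∫ x, ψ j x ∂μ))
      ((∫ x, φ i x ∂μ) * (starRingEnd ℂ) (∫ x, ψ j x ∂μ))
    rw [sub_add_cancel] at htr
    refine htr.trans (add_le_add hdiff ?_)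
    rw [norm_mul, RCLike.norm_conj]
    exact mul_le_mul hintφ hintψ (norm_nonneg _) hδ₁pos.le
  -- decompose the main integral
  have hIeq : ∫ x, ξ i (t⁻¹ • x) * (starRingEnd ℂ) (η j x) ∂μ =
      (∫ x, (ξ i - ⇑(φ i)) (t⁻¹ • x) * (starRingEnd ℂ) (η j x) ∂μ)
      + ((∫ x, φ i (t⁻¹ • x) * (starRingEnd ℂ) ((η j - ⇑(ψ j)) x) ∂μ)
      + (∫ x, φ i (t⁻¹ • x) * (starRingEnd ℂ) (ψ j x) ∂μ)) := by
    have hfns : (fun x => ξ i (t⁻¹ • x) * (starRingEnd ℂ) (η j x)) =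
        fun x => (ξ i - ⇑(φ i)) (t⁻¹ • x) * (starRingEnd ℂ) (η j x)
          + (φ i (t⁻¹ • x) * (starRingEnd ℂ) ((η j - ⇑(ψ j)) x)
          + φ i (t⁻¹ • x) * (starRingEnd ℂ) (ψ j x)) := by
      funext x
      simp only [Pi.sub_apply, map_sub]
      ring
    have hint23 : Integrable (fun x => φ i (t⁻¹ • x) * (starRingEnd ℂ) ((η j - ⇑(ψ j)) x)
        + φ i (t⁻¹ • x) * (starRingEnd ℂ) (ψ j x)) μ := hint2.add hint3
    rw [hfns, integral_add hint1 hint23, integral_add hint2 hint3]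
  -- numerics
  have e1 : δ₁ * Cη = ε / 4 := by
    rw [hδ₁def]; field_simp
  have e2 : Mφ * δ₂ ≤ ε / 8 := by
    rw [hδ₂def, mul_comm, div_mul_eq_mul_div, div_le_div_iff₀ (by linarith) (by norm_num)]
    nlinarith [mul_nonneg hε.le hδ₁pos.le]
  have e3 : δ₁ * δ₂ ≤ ε / 8 := by
    rw [hδ₂def, mul_comm, div_mul_eq_mul_div, div_le_div_iff₀ (by linarith) (by norm_num)]
    nlinarith [mul_nonneg hε.le (by linarith : (0:ℝ) ≤ Mφ)]
  have e4 : Mφ * Mψ * S t < ε / 2 := by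
    have h1 : Mφ * Mψ * S t < Mφ * Mψ * δ₃ := by
      exact mul_lt_mul_of_pos_left hSt hMM
    have h2 : Mφ * Mψ * δ₃ = ε / 2 := by
      rw [hδ₃def]; field_simp
    exact lt_of_lt_of_eq h1 h2
  rw [hIeq]
  calc ‖_ + (_ + _)‖ ≤ ‖∫ x, (ξ i - ⇑(φ i)) (t⁻¹ • x) * (starRingEnd ℂ) (η j x) ∂μ‖
        + (‖∫ x, φ i (t⁻¹ • x) * (starRingEnd ℂ) ((η j - ⇑(ψ j)) x) ∂μ‖
        + ‖∫ x, φ i (t⁻¹ • x) * (starRingEnd ℂ) (ψ j x) ∂μ‖) :=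
      (norm_add_le _ _).trans (add_le_add_right (norm_add_le _ _) _)
    _ < ε := by
      have := hbd1'
      linarith
end

section
/- Conjugation-equivariant ℓ^p vectors produce finite conjugacy classes and finite-dimensional subrepresentations: let Γ be a group, F a complex Banach space, 1 ≤ p < ∞, and π a homomorphism from Γ to the group of linear isometric bijections of F. Let ζ : Γ → F satisfy ∑_{r ∈ Γ} ‖ζ(r)‖^p < ∞ (i.e. ζ ∈ ℓ^p(Γ; F)), ζ ≠ 0, and π(s)(ζ(r)) = ζ(s·r·s⁻¹) for all s, r ∈ Γ. Then there exists t₀ ∈ Γ with ζ(t₀) ≠ 0 whose conjugacy class {s·t₀·s⁻¹ : s ∈ Γ} is a finite set, and the linear span of {π(t)(ζ(t₀)) : t ∈ Γ} is a nonzero finite-dimensional subspace of F satisfying π(s)v ∈ V for all s ∈ Γ and v ∈ V (a nonzero finite-dimensional subrepresentation of π). -/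
/-- Conjugation-equivariant `ℓ^p` vectors produce finite conjugacy classes and
finite-dimensional subrepresentations: if `ζ ∈ ℓ^p(Γ; F)` is nonzero and
satisfies `π(s)(ζ(r)) = ζ(s r s⁻¹)`, then there is `t₀` with `ζ(t₀) ≠ 0` whose
conjugacy class is finite, and the span of `{π(t)(ζ(t₀)) : t ∈ Γ}` is a nonzero
finite-dimensional `π`-invariant subspace of `F`. -/
theorem conjugation_equivariant_lp_vector_finite_dim_subrep
    {Γ : Type*} [Group Γ]
    {F : Type*} [NormedAddCommGroup F] [NormedSpace ℂ F] [CompleteSpace F]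
    (p : ℝ) (hp : 1 ≤ p)
    (π : Γ →* (F ≃ₗᵢ[ℂ] F)) (ζ : Γ → F)
    (hsum : Summable fun r : Γ => ‖ζ r‖ ^ p)
    (hne : ζ ≠ 0)
    (heq : ∀ s r : Γ, π s (ζ r) = ζ (s * r * s⁻¹)) :
    ∃ t₀ : Γ, ζ t₀ ≠ 0 ∧
      (Set.range fun s : Γ => s * t₀ * s⁻¹).Finite ∧
      Submodule.span ℂ (Set.range fun t : Γ => π t (ζ t₀)) ≠ ⊥ ∧
      FiniteDimensional ℂ (Submodule.span ℂ (Set.range fun t : Γ => π t (ζ t₀))) ∧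
      ∀ s : Γ, ∀ v ∈ Submodule.span ℂ (Set.range fun t : Γ => π t (ζ t₀)),
        π s v ∈ Submodule.span ℂ (Set.range fun t : Γ => π t (ζ t₀)) := by
  obtain ⟨t₀, ht₀⟩ : ∃ t₀, ζ t₀ ≠ 0 := by
    by_contra h
    push_neg at h
    exact hne (funext fun r => h r)
  have hnorm : ∀ s : Γ, ‖ζ (s * t₀ * s⁻¹)‖ = ‖ζ t₀‖ := fun s => by
    rw [← heq s t₀]; exact (π s).norm_map _
  have hpos : 0 < ‖ζ t₀‖ ^ p := by
    have : 0 < ‖ζ t₀‖ := norm_pos_iff.mpr ht₀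
    positivity
  have hfin : (Set.range fun s : Γ => s * t₀ * s⁻¹).Finite := by
    have hset : {r : Γ | ‖ζ t₀‖ ^ p ≤ ‖ζ r‖ ^ p}.Finite := by
      have h1 := hsum.tendsto_cofinite_zero.eventually (eventually_lt_nhds hpos)
      simpa using Filter.eventually_cofinite.mp (h1.mono fun r h => not_le.mpr h)
    refine hset.subset ?_
    rintro _ ⟨s, rfl⟩
    simp [Set.mem_setOf_eq, hnorm s]
  have hpt : ∀ t : Γ, π t (ζ t₀) = ζ (t * t₀ * t⁻¹) := fun t => heq t t₀
  have hrange : (Set.range fun t : Γ => π t (ζ t₀))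
      = ζ '' (Set.range fun s : Γ => s * t₀ * s⁻¹) := by
    ext x
    constructor
    · rintro ⟨t, rfl⟩; exact ⟨t * t₀ * t⁻¹, ⟨t, rfl⟩, (hpt t).symm⟩
    · rintro ⟨_, ⟨s, rfl⟩, rfl⟩; exact ⟨s, hpt s⟩
  have hmem : ζ t₀ ∈ Submodule.span ℂ (Set.range fun t : Γ => π t (ζ t₀)) := by
    apply Submodule.subset_span
    exact ⟨1, by simp⟩
  refine ⟨t₀, ht₀, hfin, ?_, ?_, ?_⟩
  · intro h
    rw [h, Submodule.mem_bot] at hmem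
    exact ht₀ hmem
  · rw [hrange]
    exact FiniteDimensional.span_of_finite ℂ (hfin.image ζ)
  · intro s v hv
    induction hv using Submodule.span_induction with
    | mem x hx =>
      obtain ⟨t, rfl⟩ := hx
      apply Submodule.subset_span
      refine ⟨s * t, ?_⟩
      simp [map_mul]
    | zero => simp
    | add x y _ _ hx hy => rw [map_add]; exact Submodule.add_mem _ hx hy
    | smul c x _ hx => rw [map_smul]; exact Submodule.smul_mem _ c hx
end
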